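/- arXiv:2007.07665 — 4 statements merged into one kernel-verified Lean document; each statement's English description precedes it below -/
import Mathlib

section
/- (Proposition 1, one-step form) For every natural number N̄ ≥ 1 with d·(N̄+1) ≤ c, if R(N̄+1) ≤ R(N̄), then R(N̄+2) ≤ R(N̄+1). -/
/-!
Write `φ x = log (1 + β x²)`, so `f N = B φ (S N)`. Since `φ'' x` has the sign of `1 - β x²`, the
function `φ` is increasing, and concave on `β x² ≥ 1`, where `S N ≥ α 1` lies for `N ≥ 1`. With
decreasing steps `α`, the increments of `f` therefore shrink; for steps `b ≤ a` taken from `s`,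
exponentiating turns this into a polynomial inequality whose defect in the worst case `b = a` is
`β a² (β (2 s² + 4 s a + a²) - 2) ≥ 0`. Then `R (N + 2) ≤ R (N + 1)` reads
`(c - d (N + 2)) (f (N + 2) - f (N + 1)) ≤ d f (N + 1)`, and the hypothesis is the same inequality
one step earlier, whose left side is larger and right side smaller.
-/

open Real Finset

theorem sub_mul_step_le_of_increment_le {c d x g₀ g₁ g₂ : ℝ} (hd : 0 ≤ d) (hg₀ : 0 ≤ g₀)
    (h₀₁ : g₀ ≤ g₁) (h₁₂ : g₁ ≤ g₂) (hinc : g₂ - g₁ ≤ g₁ - g₀)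
    (hstep : (c - d * (x + 1)) * g₁ ≤ (c - d * x) * g₀) :
    (c - d * (x + 2)) * g₂ ≤ (c - d * (x + 1)) * g₁ := by
  rcases le_or_gt (c - d * (x + 2)) 0 with hw | hw
  · nlinarith [mul_nonpos_of_nonpos_of_nonneg hw (sub_nonneg.2 h₁₂)]
  · nlinarith [mul_le_mul_of_nonneg_left hinc hw.le, mul_nonneg hd (sub_nonneg.2 h₀₁)]

section LogOneAddMulSq

variable {β : ℝ}

theorem log_one_add_mul_sq_le_log_one_add_mul_sq (hβ : 0 ≤ β) {x y : ℝ} (hx : 0 ≤ x)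
    (hxy : x ≤ y) : log (1 + β * x ^ 2) ≤ log (1 + β * y ^ 2) :=
  log_le_log (by positivity) (by gcongr)

theorem one_add_mul_sq_mul_le_sq (hβ : 0 ≤ β) {s a b : ℝ} (hs : 0 ≤ s) (hβs : 1 ≤ β * s ^ 2)
    (hb : 0 ≤ b) (hba : b ≤ a) :
    (1 + β * (s + a + b) ^ 2) * (1 + β * s ^ 2) ≤ (1 + β * (s + a) ^ 2) ^ 2 :=
  calc (1 + β * (s + a + b) ^ 2) * (1 + β * s ^ 2)
      ≤ (1 + β * (s + a + a) ^ 2) * (1 + β * s ^ 2) := by gcongr; linarith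
    _ = (1 + β * (s + a) ^ 2) ^ 2 - β * a ^ 2 * (β * (2 * s ^ 2 + 4 * s * a + a ^ 2) - 2) := by
      ring
    _ ≤ (1 + β * (s + a) ^ 2) ^ 2 := by
      have ha : 0 ≤ a := hb.trans hba
      have : 0 ≤ β * (2 * s ^ 2 + 4 * s * a + a ^ 2) - 2 := by
        have : 0 ≤ β * (4 * s * a + a ^ 2) := by positivity
        linarith
      exact sub_le_self _ (mul_nonneg (mul_nonneg hβ (sq_nonneg a)) this)

theorem log_one_add_mul_sq_increment_le (hβ : 0 ≤ β) {s a b : ℝ} (hs : 0 ≤ s)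
    (hβs : 1 ≤ β * s ^ 2) (hb : 0 ≤ b) (hba : b ≤ a) :
    log (1 + β * (s + a + b) ^ 2) - log (1 + β * (s + a) ^ 2)
      ≤ log (1 + β * (s + a) ^ 2) - log (1 + β * s ^ 2) := by
  have hlog := log_le_log (by positivity) (one_add_mul_sq_mul_le_sq hβ hs hβs hb hba)
  rw [log_mul (by positivity) (by positivity), log_pow] at hlog
  push_cast at hlog
  linarith

end LogOneAddMulSq

theorem rate_one_step_decrease_general
    (B β : ℝ) (hB : 0 < B) (hβ : 0 < β)
    (α : ℕ → ℝ) (hα_pos : ∀ n, 1 ≤ n → 0 < α n)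
    (hα_dec : ∀ n, 1 ≤ n → α (n + 1) ≤ α n)
    (hβα : 1 ≤ β * (α 1) ^ 2)
    (S : ℕ → ℝ) (hS : ∀ N, S N = ∑ n ∈ Finset.Icc 1 N, α n)
    (f : ℕ → ℝ) (hf : ∀ N, f N = B * Real.log (1 + β * (S N) ^ 2))
    (c d : ℝ) (hd : 0 < d)
    (R : ℕ → ℝ) (hR : ∀ N, R N = (c - d * (N : ℝ)) * f N)
    (Nbar : ℕ) (hNbar : 1 ≤ Nbar)
    (hstep : R (Nbar + 1) ≤ R Nbar) :
    R (Nbar + 2) ≤ R (Nbar + 1) := by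
  have hS_succ (N : ℕ) : S (N + 1) = S N + α (N + 1) := by
    rw [hS, hS, sum_Icc_succ_top (by omega)]
  have hα1_le : α 1 ≤ S Nbar := by
    rw [hS]
    exact single_le_sum (fun n hn => (hα_pos n (mem_Icc.1 hn).1).le) (mem_Icc.2 ⟨le_rfl, hNbar⟩)
  have hs : 0 ≤ S Nbar := (hα_pos 1 le_rfl).le.trans hα1_le
  have hβs : 1 ≤ β * S Nbar ^ 2 := hβα.trans (by gcongr; exact (hα_pos 1 le_rfl).le)
  have ha : 0 ≤ α (Nbar + 1) := (hα_pos _ (by omega)).le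
  have hb : 0 ≤ α (Nbar + 2) := (hα_pos _ (by omega)).le
  have hS₁ : S (Nbar + 1) = S Nbar + α (Nbar + 1) := hS_succ Nbar
  have hS₂ : S (Nbar + 2) = S Nbar + α (Nbar + 1) + α (Nbar + 2) := by rw [hS_succ, hS₁]
  rw [hR, hR] at hstep ⊢
  push_cast at hstep ⊢
  rw [hf, hf, hS₁] at hstep ⊢
  rw [hS₂]
  have hlog_nonneg : 0 ≤ log (1 + β * S Nbar ^ 2) := by
    simpa using log_one_add_mul_sq_le_log_one_add_mul_sq hβ.le le_rfl hs
  refine sub_mul_step_le_of_increment_le hd.le (mul_nonneg hB.le hlog_nonneg) ?_ ?_ ?_ hstep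
  · exact mul_le_mul_of_nonneg_left
      (log_one_add_mul_sq_le_log_one_add_mul_sq hβ.le hs (le_add_of_nonneg_right ha)) hB.le
  · exact mul_le_mul_of_nonneg_left (log_one_add_mul_sq_le_log_one_add_mul_sq hβ.le
      (add_nonneg hs ha) (le_add_of_nonneg_right hb)) hB.le
  · rw [← mul_sub, ← mul_sub]
    exact mul_le_mul_of_nonneg_left
      (log_one_add_mul_sq_increment_le hβ.le hs hβs hb (hα_dec _ (by omega))) hB.le

/-- Proposition 1 (one-step form): if the rate decreases from N̄ to N̄+1, it also
decreases from N̄+1 to N̄+2. -/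
theorem rate_one_step_decrease
    (B β : ℝ) (hB : 0 < B) (hβ : 0 < β)
    (α : ℕ → ℝ) (hα_pos : ∀ n, 1 ≤ n → 0 < α n)
    (hα_dec : ∀ n, 1 ≤ n → α (n + 1) ≤ α n)
    (hβα : 1 ≤ β * (α 1) ^ 2)
    (S : ℕ → ℝ) (hS : ∀ N, S N = ∑ n ∈ Finset.Icc 1 N, α n)
    (f : ℕ → ℝ) (hf : ∀ N, f N = B * Real.log (1 + β * (S N) ^ 2))
    (c d : ℝ) (hc : 0 < c) (hd : 0 < d)
    (R : ℕ → ℝ) (hR : ∀ N, R N = (c - d * (N : ℝ)) * f N)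
    (Nbar : ℕ) (hNbar : 1 ≤ Nbar)
    (hfeas : d * ((Nbar : ℝ) + 1) ≤ c)
    (hstep : R (Nbar + 1) ≤ R Nbar) :
    R (Nbar + 2) ≤ R (Nbar + 1) :=
  rate_one_step_decrease_general B β hB hβ α hα_pos hα_dec hβα S hS f hf c d hd R hR Nbar hNbar
    hstep
end

section
/- (Proposition 1, full unimodality of the rate) If N̄ ≥ 1 is a natural number such that R(N̄+1) ≤ R(N̄), then R is nonincreasing beyond N̄ on the feasible range: for every natural number N with N̄ ≤ N and d·(N+1) ≤ c, one has R(N+1) ≤ R(N). -/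
/-!
Since `R (N + 1) - R N = (c - d (N + 1)) (f (N + 1) - f N) - d f N`, the increments of `R` are
nonincreasing as long as `c - d (N + 2) ≥ 0`, provided `f` is nondecreasing with nonincreasing
increments. For `f = B log (1 + β S²)` this holds from `N = 1` on: `S` grows by the nonincreasing
steps `α n`, and `s ↦ log (1 + β s²)` is concave where `β s² ≥ 1`, which `S N ≥ α 1` guarantees.
So once one increment of `R` is nonpositive, all later feasible ones are.
-/

open Real

section LogOneAddMulSq

variable {β x y t : ℝ}

theorem log_one_add_mul_sq_le_of_le (hβ : 0 ≤ β) (hx : 0 ≤ x) (hxy : x ≤ y) :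
    log (1 + β * x ^ 2) ≤ log (1 + β * y ^ 2) := by
  gcongr

theorem log_one_add_mul_sq_add_sub_le (hβ : 0 ≤ β) (hx : 0 ≤ x) (hβx : 1 ≤ β * x ^ 2)
    (hxy : x ≤ y) (ht : 0 ≤ t) :
    log (1 + β * (y + t) ^ 2) - log (1 + β * y ^ 2) ≤
      log (1 + β * (x + t) ^ 2) - log (1 + β * x ^ 2) := by
  have hxy' : 1 ≤ β * (x * y) := by nlinarith [mul_le_mul_of_nonneg_left hxy (mul_nonneg hβ hx)]
  have hfactor : 0 ≤ β * (2 * (x * y) + t * (x + y)) - 2 := by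
    nlinarith [mul_nonneg hβ (mul_nonneg ht (by linarith : 0 ≤ x + y))]
  have hprod : (1 + β * (y + t) ^ 2) * (1 + β * x ^ 2) ≤
      (1 + β * (x + t) ^ 2) * (1 + β * y ^ 2) := by
    have hdiff : (1 + β * (x + t) ^ 2) * (1 + β * y ^ 2) - (1 + β * (y + t) ^ 2) * (1 + β * x ^ 2)
        = β * t * (y - x) * (β * (2 * (x * y) + t * (x + y)) - 2) := by ring
    have hyx := sub_nonneg.2 hxy
    linarith [mul_nonneg (mul_nonneg (mul_nonneg hβ ht) hyx) hfactor]
  have h := log_le_log (by positivity) hprod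
  rw [log_mul (by positivity) (by positivity), log_mul (by positivity) (by positivity)] at h
  linarith

theorem log_one_add_mul_sq_add_add_sub_le {a b : ℝ} (hβ : 0 ≤ β) (hx : 0 ≤ x)
    (hβx : 1 ≤ β * x ^ 2) (hb : 0 ≤ b) (hba : b ≤ a) :
    log (1 + β * (x + a + b) ^ 2) - log (1 + β * (x + a) ^ 2) ≤
      log (1 + β * (x + a) ^ 2) - log (1 + β * x ^ 2) := by
  have := log_one_add_mul_sq_add_sub_le hβ hx hβx (by linarith : x ≤ x + a) hb
  have := log_one_add_mul_sq_le_of_le hβ (by linarith : 0 ≤ x + b) (by linarith : x + b ≤ x + a)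
  linarith

end LogOneAddMulSq

section Rate

variable {f R : ℕ → ℝ} {c d : ℝ}

theorem rate_succ_sub_le (hR : ∀ N, R N = (c - d * N) * f N) (hd : 0 ≤ d) {N : ℕ}
    (hfeas : d * ((N : ℝ) + 2) ≤ c) (hmono : f N ≤ f (N + 1))
    (hconc : f (N + 2) - f (N + 1) ≤ f (N + 1) - f N) :
    R (N + 2) - R (N + 1) ≤ R (N + 1) - R N := by
  rw [hR, hR, hR]
  push_cast
  nlinarith [mul_le_mul_of_nonneg_left hconc (by linarith : 0 ≤ c - d * ((N : ℝ) + 2)),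
    mul_le_mul_of_nonneg_left hmono hd]

theorem rate_antitone_of_step (hR : ∀ N, R N = (c - d * N) * f N) (hd : 0 ≤ d) {N₀ : ℕ}
    (hmono : ∀ N, N₀ ≤ N → f N ≤ f (N + 1))
    (hconc : ∀ N, N₀ ≤ N → f (N + 2) - f (N + 1) ≤ f (N + 1) - f N)
    (hstep : R (N₀ + 1) ≤ R N₀) :
    ∀ N, N₀ ≤ N → d * ((N : ℝ) + 1) ≤ c → R (N + 1) ≤ R N := by
  intro N hN
  induction N, hN using Nat.le_induction with
  | base => exact fun _ ↦ hstep
  | succ N hN ih =>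
    intro hfeas
    push_cast at hfeas
    have hprev := ih (by nlinarith)
    have := rate_succ_sub_le hR hd (by linarith) (hmono N hN) (hconc N hN)
    linarith

end Rate

theorem rate_unimodal_general
    (B β : ℝ) (hB : 0 < B) (hβ : 0 < β)
    (α : ℕ → ℝ) (hα_pos : ∀ n, 1 ≤ n → 0 < α n)
    (hα_dec : ∀ n, 1 ≤ n → α (n + 1) ≤ α n)
    (hβα : 1 ≤ β * (α 1) ^ 2)
    (S : ℕ → ℝ) (hS : ∀ N, S N = ∑ n ∈ Finset.Icc 1 N, α n)
    (f : ℕ → ℝ) (hf : ∀ N, f N = B * Real.log (1 + β * (S N) ^ 2))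
    (c d : ℝ) (hd : 0 < d)
    (R : ℕ → ℝ) (hR : ∀ N, R N = (c - d * (N : ℝ)) * f N)
    (Nbar : ℕ) (hNbar : 1 ≤ Nbar)
    (hstep : R (Nbar + 1) ≤ R Nbar) :
    ∀ N : ℕ, Nbar ≤ N → d * ((N : ℝ) + 1) ≤ c → R (N + 1) ≤ R N := by
  have hS_succ (N : ℕ) : S (N + 1) = S N + α (N + 1) := by
    rw [hS, hS, Finset.sum_Icc_succ_top (by omega)]
  have hS_ge {N : ℕ} (hN : 1 ≤ N) : α 1 ≤ S N := by
    rw [hS]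
    exact Finset.single_le_sum (fun n hn ↦ (hα_pos n (Finset.mem_Icc.1 hn).1).le)
      (Finset.mem_Icc.2 ⟨le_rfl, hN⟩)
  have hS_nonneg {N : ℕ} (hN : 1 ≤ N) : 0 ≤ S N := (hα_pos 1 le_rfl).le.trans (hS_ge hN)
  have hβS {N : ℕ} (hN : 1 ≤ N) : 1 ≤ β * S N ^ 2 := by
    have := (hα_pos 1 le_rfl).le
    exact hβα.trans (by gcongr; exact hS_ge hN)
  refine rate_antitone_of_step hR hd.le (fun N hN ↦ ?_) (fun N hN ↦ ?_) hstep
  · have hN1 : 1 ≤ N := hNbar.trans hN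
    rw [hf, hf, hS_succ]
    have := (hα_pos (N + 1) (by omega)).le
    have := hS_nonneg hN1
    gcongr
    linarith
  · have hN1 : 1 ≤ N := hNbar.trans hN
    rw [hf, hf, hf, hS_succ (N + 1), hS_succ N, ← mul_sub, ← mul_sub]
    exact mul_le_mul_of_nonneg_left (log_one_add_mul_sq_add_add_sub_le hβ.le (hS_nonneg hN1)
      (hβS hN1) (hα_pos (N + 2) (by omega)).le (hα_dec (N + 1) (by omega))) hB.le

/-- Proposition 1 (full unimodality of the rate): once the rate decreases, it keeps
decreasing on the feasible range. -/
theorem rate_unimodal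
    (B β : ℝ) (hB : 0 < B) (hβ : 0 < β)
    (α : ℕ → ℝ) (hα_pos : ∀ n, 1 ≤ n → 0 < α n)
    (hα_dec : ∀ n, 1 ≤ n → α (n + 1) ≤ α n)
    (hβα : 1 ≤ β * (α 1) ^ 2)
    (S : ℕ → ℝ) (hS : ∀ N, S N = ∑ n ∈ Finset.Icc 1 N, α n)
    (f : ℕ → ℝ) (hf : ∀ N, f N = B * Real.log (1 + β * (S N) ^ 2))
    (c d : ℝ) (hc : 0 < c) (hd : 0 < d)
    (R : ℕ → ℝ) (hR : ∀ N, R N = (c - d * (N : ℝ)) * f N)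
    (Nbar : ℕ) (hNbar : 1 ≤ Nbar)
    (hstep : R (Nbar + 1) ≤ R Nbar) :
    ∀ N : ℕ, Nbar ≤ N → d * ((N : ℝ) + 1) ≤ c → R (N + 1) ≤ R N :=
  rate_unimodal_general B β hB hβ α hα_pos hα_dec hβα S hS f hf c d hd R hR Nbar hNbar hstep
end

section
/- (Inequality (17)) For every natural number N ≥ 1, one has α(N+2)²/(1 + β·S(N+1)²) + 2·α(N+2)·S(N+1)/(1 + β·S(N+1)²) ≤ α(N+1)²/(1 + β·S(N)²) + 2·α(N+1)·S(N)/(1 + β·S(N)²). -/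
/-!
Write `a = α (N+1)`, `b = α (N+2)`, `s = S N`, so that `S (N+1) = s + a` and each side of (17)
is `(x² + 2·x·t) / (1 + β t²)` for the pair `(x, t) = (b, s + a)`, resp. `(a, s)`.
Since `b ≤ a`, the left side only grows when `b` is replaced by `a`; after clearing denominators
the remaining inequality reduces to `a² (β a² + 4 β a s + 2 (β s² - 1)) ≥ 0`, which holds
because `β s² ≥ β α(1)² ≥ 1`.
-/

theorem sq_add_two_mul_div_le_of_le {β s a b : ℝ} (hs : 0 ≤ s) (hb : 0 ≤ b) (hba : b ≤ a)
    (hβs : 1 ≤ β * s ^ 2) :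
    (b ^ 2 + 2 * b * (s + a)) / (1 + β * (s + a) ^ 2) ≤ (a ^ 2 + 2 * a * s) / (1 + β * s ^ 2) := by
  have hβ : 0 ≤ β := by nlinarith [sq_nonneg s]
  have ha : 0 ≤ a := hb.trans hba
  have hdiff : (a ^ 2 + 2 * a * s) * (1 + β * (s + a) ^ 2) - (a ^ 2 + 2 * a * (s + a)) * (1 + β * s ^ 2)
      = a ^ 2 * (β * a ^ 2 + 4 * β * a * s + 2 * (β * s ^ 2 - 1)) := by ring
  rw [div_le_div_iff₀ (by positivity) (by positivity)]
  calc (b ^ 2 + 2 * b * (s + a)) * (1 + β * s ^ 2)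
      ≤ (a ^ 2 + 2 * a * (s + a)) * (1 + β * s ^ 2) := by gcongr
    _ ≤ (a ^ 2 + 2 * a * s) * (1 + β * (s + a) ^ 2) := by
        have hβs_sub : 0 ≤ β * s ^ 2 - 1 := by linarith
        have hfactor : 0 ≤ a ^ 2 * (β * a ^ 2 + 4 * β * a * s + 2 * (β * s ^ 2 - 1)) := by
          positivity
        linarith

theorem ineq_seventeen_general
    (β : ℝ)
    (α : ℕ → ℝ) (hα_pos : ∀ n, 1 ≤ n → 0 < α n)
    (hα_dec : ∀ n, 1 ≤ n → α (n + 1) ≤ α n)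
    (hβα : 1 ≤ β * (α 1) ^ 2)
    (S : ℕ → ℝ) (hS : ∀ N, S N = ∑ n ∈ Finset.Icc 1 N, α n) :
    ∀ N : ℕ, 1 ≤ N →
      (α (N + 2)) ^ 2 / (1 + β * (S (N + 1)) ^ 2)
          + 2 * α (N + 2) * S (N + 1) / (1 + β * (S (N + 1)) ^ 2)
        ≤ (α (N + 1)) ^ 2 / (1 + β * (S N) ^ 2)
          + 2 * α (N + 1) * S N / (1 + β * (S N) ^ 2) := by
  intro N hN
  have hS_succ : S (N + 1) = S N + α (N + 1) := by
    rw [hS, hS, Finset.sum_Icc_succ_top (by omega)]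
  have hα₁ : 0 < α 1 := hα_pos 1 le_rfl
  have hα₁_le : α 1 ≤ S N := by
    rw [hS]
    exact Finset.single_le_sum (fun i hi => (hα_pos i (Finset.mem_Icc.mp hi).1).le)
      (Finset.mem_Icc.mpr ⟨le_rfl, hN⟩)
  have hβ : 0 ≤ β := by nlinarith [sq_nonneg (α 1)]
  have hβS : 1 ≤ β * S N ^ 2 := hβα.trans (by gcongr)
  rw [← add_div, ← add_div, hS_succ]
  exact sq_add_two_mul_div_le_of_le (hα₁.le.trans hα₁_le)
    (hα_pos _ (by omega)).le (hα_dec _ (by omega)) hβS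

/-- Inequality (17). -/
theorem ineq_seventeen
    (B β : ℝ) (hB : 0 < B) (hβ : 0 < β)
    (α : ℕ → ℝ) (hα_pos : ∀ n, 1 ≤ n → 0 < α n)
    (hα_dec : ∀ n, 1 ≤ n → α (n + 1) ≤ α n)
    (hβα : 1 ≤ β * (α 1) ^ 2)
    (S : ℕ → ℝ) (hS : ∀ N, S N = ∑ n ∈ Finset.Icc 1 N, α n)
    (f : ℕ → ℝ) (hf : ∀ N, f N = B * Real.log (1 + β * (S N) ^ 2)) :
    ∀ N : ℕ, 1 ≤ N →
      (α (N + 2)) ^ 2 / (1 + β * (S (N + 1)) ^ 2)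
          + 2 * α (N + 2) * S (N + 1) / (1 + β * (S (N + 1)) ^ 2)
        ≤ (α (N + 1)) ^ 2 / (1 + β * (S N) ^ 2)
          + 2 * α (N + 1) * S N / (1 + β * (S N) ^ 2) :=
  ineq_seventeen_general β α hα_pos hα_dec hβα S hS
end

section
/- (Proposition 3, unimodality of the scalarized rate–energy-efficiency objective) Let w be a real number with 0 < w < 1 and let R_opt and EE_opt be arbitrary real constants. Define G(N) = min{ w·(R(N) − R_opt), (1 − w)·(EE(N) − EE_opt) }. If N̄ ≥ 1 is a natural number with d·(N̄+1) ≤ c and G(N̄+1) ≤ G(N̄), then for every natural number N with N̄ ≤ N and d·(N+1) ≤ c, one has G(N+1) ≤ G(N). -/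
open Finset Real

/-!
The factor `log (1 + β S(N)²)` is nondecreasing and discretely concave in `N ≥ 1`: the partial
sums grow by decreasing increments and `s ↦ log (1 + β s²)` is concave where `β s² ≥ 1`, which
`β α(1)² ≥ 1` guarantees from the start. Multiplying by the nonnegative decreasing affine factor
`c - d N` keeps `R` concave on the feasible range, so once `R` descends it keeps descending.
Dividing a concave sequence by a positive affine one preserves the property that a descent is
followed by a descent, so `EE` has it too, and a descent of `R` forces one of `EE` as long as
`R ≥ 0`. These three facts make every descent of `min (w (R - R_opt)) ((1 - w) (EE - EE_opt))`
propagate to the next step.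
-/

theorem one_add_mul_sq_mul_le_sq_s10 {β x p q : ℝ} (hβ : 0 < β) (hx : 0 ≤ x)
    (hβx : 1 ≤ β * x ^ 2) (hq : 0 ≤ q) (hqp : q ≤ p) :
    (1 + β * x ^ 2) * (1 + β * (x + p + q) ^ 2) ≤ (1 + β * (x + p) ^ 2) ^ 2 := by
  have hp : 0 ≤ p := hq.trans hqp
  set y := x + p
  set z := x + p + q
  have hsum : 2 ≤ β * (y ^ 2 + x * z) := by
    have : 2 * x ^ 2 ≤ y ^ 2 + x * z := by nlinarith
    nlinarith [mul_le_mul_of_nonneg_left this hβ.le]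
  have hgap : 0 ≤ y * (p - q) + p * q := by nlinarith
  have hpq : 0 ≤ (p - q) * (4 * y - (p - q)) := mul_nonneg (by linarith) (by linarith)
  -- RHS - LHS = β² (y² - x z) (y² + x z) - β (x² + z² - 2 y²), where
  -- y² - x z = y (p - q) + p q and x² + z² - 2 y² = p² + q² - 2 y (p - q)
  have hdiff : (1 + β * y ^ 2) ^ 2 - (1 + β * x ^ 2) * (1 + β * z ^ 2)
      = β * ((β * (y ^ 2 + x * z)) * (y * (p - q) + p * q) - (p ^ 2 + q ^ 2 - 2 * y * (p - q))) := by
    ring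
  nlinarith [mul_le_mul_of_nonneg_right hsum hgap, mul_nonneg hβ.le hpq]

theorem log_one_add_mul_sq_concave_step {β x p q : ℝ} (hβ : 0 < β) (hx : 0 ≤ x)
    (hβx : 1 ≤ β * x ^ 2) (hq : 0 ≤ q) (hqp : q ≤ p) :
    log (1 + β * x ^ 2) + log (1 + β * (x + p + q) ^ 2) ≤ 2 * log (1 + β * (x + p) ^ 2) := by
  rw [← log_mul (by positivity) (by positivity)]
  calc _ ≤ log ((1 + β * (x + p) ^ 2) ^ 2) :=
        log_le_log (by positivity) (one_add_mul_sq_mul_le_sq_s10 hβ hx hβx hq hqp)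
    _ = 2 * log (1 + β * (x + p) ^ 2) := by rw [log_pow, Nat.cast_ofNat]

section PartialSums

variable {β : ℝ} {α S : ℕ → ℝ}

theorem monotone_log_one_add_mul_sq_partialSum (hβ : 0 ≤ β) (hα : ∀ n, 1 ≤ n → 0 < α n)
    (hS : ∀ N, S N = ∑ n ∈ Icc 1 N, α n) : Monotone fun N => log (1 + β * S N ^ 2) := by
  have hα_nonneg (N : ℕ) : ∀ n ∈ Icc 1 N, 0 ≤ α n := fun n hn => (hα n (mem_Icc.1 hn).1).le
  intro M N hMN
  have hS_nonneg : 0 ≤ S M := hS M ▸ sum_nonneg (hα_nonneg M)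
  have hS_mono : S M ≤ S N := by
    rw [hS, hS]
    exact sum_le_sum_of_subset_of_nonneg (Icc_subset_Icc_right hMN) fun n hn _ => hα_nonneg N n hn
  dsimp only
  gcongr

theorem log_one_add_mul_sq_partialSum_concave (hβ : 0 < β) (hα_pos : ∀ n, 1 ≤ n → 0 < α n)
    (hα_dec : ∀ n, 1 ≤ n → α (n + 1) ≤ α n) (hβα : 1 ≤ β * α 1 ^ 2)
    (hS : ∀ N, S N = ∑ n ∈ Icc 1 N, α n) {N : ℕ} (hN : 1 ≤ N) :
    log (1 + β * S N ^ 2) + log (1 + β * S (N + 2) ^ 2) ≤ 2 * log (1 + β * S (N + 1) ^ 2) := by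
  have hS_succ : ∀ k, S (k + 1) = S k + α (k + 1) := fun k => by
    rw [hS, hS, sum_Icc_succ_top (by omega)]
  have hα₁_le : α 1 ≤ S N := hS N ▸
    single_le_sum (fun n hn => (hα_pos n (mem_Icc.1 hn).1).le) (mem_Icc.2 ⟨le_rfl, hN⟩)
  have hα₁ : 0 < α 1 := hα_pos 1 le_rfl
  have hβS : 1 ≤ β * S N ^ 2 :=
    hβα.trans (mul_le_mul_of_nonneg_left (pow_le_pow_left₀ hα₁.le hα₁_le 2) hβ.le)
  rw [hS_succ (N + 1), hS_succ N]
  exact log_one_add_mul_sq_concave_step hβ (hα₁.trans_le hα₁_le).le hβS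
    (hα_pos (N + 2) (by omega)).le (hα_dec (N + 1) (by omega))

end PartialSums

theorem sub_mul_concave_step {f : ℕ → ℝ} {c d : ℝ} {n : ℕ} (hd : 0 ≤ d)
    (hfeas : d * ((n : ℝ) + 2) ≤ c) (hconc : f n + f (n + 2) ≤ 2 * f (n + 1))
    (hmono : f n ≤ f (n + 1)) :
    (c - d * n) * f n + (c - d * ↑(n + 2)) * f (n + 2) ≤ 2 * ((c - d * ↑(n + 1)) * f (n + 1)) := by
  push_cast
  nlinarith [mul_nonneg (sub_nonneg.2 hfeas) (by linarith : 0 ≤ 2 * f (n + 1) - f n - f (n + 2)),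
    mul_nonneg hd (sub_nonneg.2 hmono)]

theorem div_step_le_of_concave_of_affine {r₀ r₁ r₂ ℓ₀ ℓ₁ ℓ₂ : ℝ} (hℓ₀ : 0 < ℓ₀) (hℓ₁ : 0 < ℓ₁)
    (hℓ₂ : 0 < ℓ₂) (hℓ : ℓ₀ + ℓ₂ = 2 * ℓ₁) (hr : r₀ + r₂ ≤ 2 * r₁) (h : r₁ / ℓ₁ ≤ r₀ / ℓ₀) :
    r₂ / ℓ₂ ≤ r₁ / ℓ₁ := by
  obtain rfl : ℓ₂ = 2 * ℓ₁ - ℓ₀ := by linarith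
  rw [div_le_div_iff₀ hℓ₁ hℓ₀] at h
  rw [div_le_div_iff₀ hℓ₂ hℓ₁]
  nlinarith [mul_le_mul_of_nonneg_right (by linarith : r₂ ≤ 2 * r₁ - r₀) hℓ₁.le]

theorem min_step_le_of_step_le {a₀ a₁ a₂ b₀ b₁ b₂ : ℝ} (ha : a₁ ≤ a₀ → a₂ ≤ a₁)
    (hb : b₁ ≤ b₀ → b₂ ≤ b₁) (hab : a₂ ≤ a₁ → b₂ ≤ b₁) (h : min a₁ b₁ ≤ min a₀ b₀) :
    min a₂ b₂ ≤ min a₁ b₁ := by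
  by_cases ha₂ : a₂ ≤ a₁
  · exact min_le_min ha₂ (hab ha₂)
  · have ha₀ : a₀ < a₁ := lt_of_not_ge (mt ha ha₂)
    have hb₁ : b₁ < a₁ := by
      simpa using (h.trans (min_le_left _ _)).trans_lt ha₀
    rw [min_eq_right hb₁.le] at h ⊢
    exact (min_le_right _ _).trans (hb (h.trans (min_le_right _ _)))

theorem scalarized_objective_unimodal_general
    (B β : ℝ) (hB : 0 < B) (hβ : 0 < β)
    (α : ℕ → ℝ) (hα_pos : ∀ n, 1 ≤ n → 0 < α n)
    (hα_dec : ∀ n, 1 ≤ n → α (n + 1) ≤ α n)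
    (hβα : 1 ≤ β * (α 1) ^ 2)
    (S : ℕ → ℝ) (hS : ∀ N, S N = ∑ n ∈ Finset.Icc 1 N, α n)
    (f : ℕ → ℝ) (hf : ∀ N, f N = B * Real.log (1 + β * (S N) ^ 2))
    (c d : ℝ) (hd : 0 < d)
    (R : ℕ → ℝ) (hR : ∀ N, R N = (c - d * (N : ℝ)) * f N)
    (γ ψ : ℝ) (hγ : 0 < γ) (hψ : 0 < ψ)
    (EE : ℕ → ℝ) (hEE : ∀ N, EE N = R N / (γ + ψ * (N : ℝ)))
    (w : ℝ) (hw₀ : 0 < w) (hw₁ : w < 1)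
    (Ropt EEopt : ℝ)
    (G : ℕ → ℝ)
    (hG : ∀ N, G N = min (w * (R N - Ropt)) ((1 - w) * (EE N - EEopt)))
    (Nbar : ℕ) (hNbar : 1 ≤ Nbar)
    (hstep : G (Nbar + 1) ≤ G Nbar) :
    ∀ N : ℕ, Nbar ≤ N → d * ((N : ℝ) + 1) ≤ c → G (N + 1) ≤ G N := by
  have hf_nonneg (n : ℕ) : 0 ≤ f n := hf n ▸ mul_nonneg hB.le (log_nonneg (le_add_of_nonneg_right (by positivity)))
  have hf_mono : Monotone f := fun m n hmn => by
    simp only [hf]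
    exact mul_le_mul_of_nonneg_left (monotone_log_one_add_mul_sq_partialSum hβ.le hα_pos hS hmn) hB.le
  have hf_conc (n : ℕ) (hn : 1 ≤ n) : f n + f (n + 2) ≤ 2 * f (n + 1) := by
    simp only [hf]
    nlinarith [log_one_add_mul_sq_partialSum_concave hβ hα_pos hα_dec hβα hS hn]
  have hL (n : ℕ) : 0 < γ + ψ * n := by positivity
  intro N hN
  induction N, hN using Nat.le_induction with
  | base => exact fun _ => hstep
  | succ n hn ih =>
    intro hfeas
    push_cast at hfeas
    have hR_conc : R n + R (n + 2) ≤ 2 * R (n + 1) := by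
      simpa only [hR] using sub_mul_concave_step hd.le (by linarith) (hf_conc n (hNbar.trans hn))
        (hf_mono n.le_succ)
    have hR_nonneg : 0 ≤ R (n + 2) := hR _ ▸ mul_nonneg (by push_cast; linarith) (hf_nonneg _)
    simp only [hG] at ih ⊢
    refine min_step_le_of_step_le ?_ ?_ ?_ (ih (by linarith))
    all_goals simp only [mul_le_mul_iff_right₀ hw₀, mul_le_mul_iff_right₀ (sub_pos.2 hw₁),
      sub_le_sub_iff_right]
    · intro h
      linarith
    · simp only [hEE]
      exact div_step_le_of_concave_of_affine (hL _) (hL _) (hL _) (by push_cast; ring) hR_conc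
    · intro h
      simp only [hEE]
      exact div_le_div₀ (hR_nonneg.trans h) h (hL _) (by push_cast; linarith)

/-- Proposition 3 (unimodality of the scalarized rate–energy-efficiency objective). -/
theorem scalarized_objective_unimodal
    (B β : ℝ) (hB : 0 < B) (hβ : 0 < β)
    (α : ℕ → ℝ) (hα_pos : ∀ n, 1 ≤ n → 0 < α n)
    (hα_dec : ∀ n, 1 ≤ n → α (n + 1) ≤ α n)
    (hβα : 1 ≤ β * (α 1) ^ 2)
    (S : ℕ → ℝ) (hS : ∀ N, S N = ∑ n ∈ Finset.Icc 1 N, α n)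
    (f : ℕ → ℝ) (hf : ∀ N, f N = B * Real.log (1 + β * (S N) ^ 2))
    (c d : ℝ) (hc : 0 < c) (hd : 0 < d)
    (R : ℕ → ℝ) (hR : ∀ N, R N = (c - d * (N : ℝ)) * f N)
    (γ ψ : ℝ) (hγ : 0 < γ) (hψ : 0 < ψ)
    (EE : ℕ → ℝ) (hEE : ∀ N, EE N = R N / (γ + ψ * (N : ℝ)))
    (w : ℝ) (hw₀ : 0 < w) (hw₁ : w < 1)
    (Ropt EEopt : ℝ)
    (G : ℕ → ℝ)
    (hG : ∀ N, G N = min (w * (R N - Ropt)) ((1 - w) * (EE N - EEopt)))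
    (Nbar : ℕ) (hNbar : 1 ≤ Nbar)
    (hfeas : d * ((Nbar : ℝ) + 1) ≤ c)
    (hstep : G (Nbar + 1) ≤ G Nbar) :
    ∀ N : ℕ, Nbar ≤ N → d * ((N : ℝ) + 1) ≤ c → G (N + 1) ≤ G N :=
  scalarized_objective_unimodal_general B β hB hβ α hα_pos hα_dec hβα S hS f hf c d hd R hR γ ψ hγ
    hψ EE hEE w hw₀ hw₁ Ropt EEopt G hG Nbar hNbar hstep
end
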